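/- Let n ≥ 1 and a > 1, let u, A : ℝ × ℝⁿ → ℝ be smooth with u > 0 everywhere, suppose ∂ₜu = Δu + A, set w := log ∘ u and, for t > 0, F(t,x) := t·( ‖∇w(t,x)‖² + a·A(t,x)/u(t,x) − a·∂ₜw(t,x) ). Let s > 0 and z ∈ ℝⁿ be such that at (s,z) one has ∇F = 0, ΔF ≤ 0 and ∂ₜF ≥ 0 (as holds when F attains its maximum over [0,s] × ℝⁿ at (s,z)). Then, evaluating at (s,z): F − a·s²·Δ(A·u⁻¹) ≥ 2(a−1)·s²·⟨∇w, ∇(A·u⁻¹)⟩ + 2s²·‖D²w‖². -/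

import Mathlib

open scoped BigOperators

/-- The gradient of `f : ℝⁿ → ℝ`. -/
noncomputable def egrad {n : ℕ} (f : EuclideanSpace ℝ (Fin n) → ℝ)
    (x : EuclideanSpace ℝ (Fin n)) : EuclideanSpace ℝ (Fin n) := gradient f x

/-- The partial derivative of `f` in the `i`-th coordinate direction. -/
noncomputable def epd {n : ℕ} (i : Fin n) (f : EuclideanSpace ℝ (Fin n) → ℝ)
    (x : EuclideanSpace ℝ (Fin n)) : ℝ := fderiv ℝ f x (EuclideanSpace.single i 1)

/-- The Laplacian `Δf = ∑ᵢ ∂ᵢ∂ᵢ f` (trace of the Hessian). -/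
noncomputable def elap {n : ℕ} (f : EuclideanSpace ℝ (Fin n) → ℝ)
    (x : EuclideanSpace ℝ (Fin n)) : ℝ := ∑ i, epd i (epd i f) x

/-- The squared Hilbert–Schmidt norm `‖D²f‖²` of the Hessian of `f`. -/
noncomputable def ehess2 {n : ℕ} (f : EuclideanSpace ℝ (Fin n) → ℝ)
    (x : EuclideanSpace ℝ (Fin n)) : ℝ := ∑ i, ∑ j, (epd i (epd j f) x) ^ 2

/-- Spatial gradient of `f : ℝ × ℝⁿ → ℝ` at fixed time `t`. -/
noncomputable def sgrad {n : ℕ} (f : ℝ × EuclideanSpace ℝ (Fin n) → ℝ) (t : ℝ)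
    (x : EuclideanSpace ℝ (Fin n)) : EuclideanSpace ℝ (Fin n) := egrad (fun y => f (t, y)) x

/-- Spatial Laplacian of `f : ℝ × ℝⁿ → ℝ` at fixed time `t`. -/
noncomputable def slap {n : ℕ} (f : ℝ × EuclideanSpace ℝ (Fin n) → ℝ) (t : ℝ)
    (x : EuclideanSpace ℝ (Fin n)) : ℝ := elap (fun y => f (t, y)) x

/-- Squared Hilbert–Schmidt norm of the spatial Hessian of `f : ℝ × ℝⁿ → ℝ`. -/
noncomputable def shess2 {n : ℕ} (f : ℝ × EuclideanSpace ℝ (Fin n) → ℝ) (t : ℝ)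
    (x : EuclideanSpace ℝ (Fin n)) : ℝ := ehess2 (fun y => f (t, y)) x

/-- Time derivative `∂ₜ f` of `f : ℝ × ℝⁿ → ℝ`. -/
noncomputable def pdt {n : ℕ} (f : ℝ × EuclideanSpace ℝ (Fin n) → ℝ) (t : ℝ)
    (x : EuclideanSpace ℝ (Fin n)) : ℝ := deriv (fun s => f (s, x)) t

namespace HarnackAux

noncomputable def Dv {n : ℕ} (v : ℝ × EuclideanSpace ℝ (Fin n))
    (g : ℝ × EuclideanSpace ℝ (Fin n) → ℝ)
    (p : ℝ × EuclideanSpace ℝ (Fin n)) : ℝ := fderiv ℝ g p v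

noncomputable def e0 {n : ℕ} : ℝ × EuclideanSpace ℝ (Fin n) := (1, 0)
noncomputable def eI {n : ℕ} (i : Fin n) : ℝ × EuclideanSpace ℝ (Fin n) :=
  (0, EuclideanSpace.single i 1)

variable {n : ℕ} {f g u : ℝ × EuclideanSpace ℝ (Fin n) → ℝ}
  {v p : ℝ × EuclideanSpace ℝ (Fin n)} {c t : ℝ} {x : EuclideanSpace ℝ (Fin n)}

lemma sd (hg : ContDiff ℝ (⊤ : ℕ∞) g) (p : ℝ × EuclideanSpace ℝ (Fin n)) :
    DifferentiableAt ℝ g p := (hg.differentiable (by simp)).differentiableAt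

lemma smooth_Dv (hg : ContDiff ℝ (⊤ : ℕ∞) g) (v : ℝ × EuclideanSpace ℝ (Fin n)) :
    ContDiff ℝ (⊤ : ℕ∞) (Dv v g) :=
  (hg.fderiv_right (by simp)).clm_apply contDiff_const

lemma Dv_comm (hg : ContDiff ℝ (⊤ : ℕ∞) g) (v w p : ℝ × EuclideanSpace ℝ (Fin n)) :
    Dv v (Dv w g) p = Dv w (Dv v g) p := by
  have hsymm := second_derivative_symmetric
    (f := g) (f' := fderiv ℝ g) (f'' := fderiv ℝ (fderiv ℝ g) p)
    (fun y => (sd hg y).hasFDerivAt)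
    (((hg.fderiv_right (m := 1) (by exact WithTop.coe_le_coe.mpr le_top)).differentiable one_ne_zero p).hasFDerivAt) v w
  have h1 : ∀ v w : ℝ × EuclideanSpace ℝ (Fin n),
      Dv v (Dv w g) p = fderiv ℝ (fderiv ℝ g) p v w := by
    intro v w
    unfold Dv
    rw [fderiv_clm_apply ((hg.fderiv_right (m := 1) (by exact WithTop.coe_le_coe.mpr le_top)).differentiable one_ne_zero p)
      (differentiableAt_const _)]
    simp
  rw [h1, h1, hsymm]

lemma Dv_add (hf : DifferentiableAt ℝ f p) (hg : DifferentiableAt ℝ g p) :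
    Dv v (fun q => f q + g q) p = Dv v f p + Dv v g p := by
  unfold Dv; rw [fderiv_fun_add hf hg]; simp

lemma Dv_sub (hf : DifferentiableAt ℝ f p) (hg : DifferentiableAt ℝ g p) :
    Dv v (fun q => f q - g q) p = Dv v f p - Dv v g p := by
  unfold Dv; rw [fderiv_fun_sub hf hg]; simp

lemma Dv_const_mul (hf : DifferentiableAt ℝ f p) :
    Dv v (fun q => c * f q) p = c * Dv v f p := by
  unfold Dv; rw [fderiv_const_mul hf]; simp

lemma Dv_mul (hf : DifferentiableAt ℝ f p) (hg : DifferentiableAt ℝ g p) :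
    Dv v (fun q => f q * g q) p = Dv v f p * g p + f p * Dv v g p := by
  unfold Dv; rw [fderiv_fun_mul hf hg]; simp; ring

lemma Dv_sq (hf : DifferentiableAt ℝ f p) :
    Dv v (fun q => f q ^ 2) p = 2 * f p * Dv v f p := by
  have h := Dv_mul (v := v) (p := p) hf hf
  simp only [← sq] at h; rw [h]; ring

lemma Dv_sum {m : ℕ} (h : Fin m → (ℝ × EuclideanSpace ℝ (Fin n)) → ℝ)
    (hh : ∀ i, DifferentiableAt ℝ (h i) p) :
    Dv v (fun q => ∑ i, h i q) p = ∑ i, Dv v (h i) p := by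
  unfold Dv; rw [fderiv_fun_sum fun i _ => hh i]; simp

lemma Dv_inv (hg : DifferentiableAt ℝ g p) (hg0 : g p ≠ 0) :
    Dv v (fun q => (g q)⁻¹) p = -(Dv v g p) / g p ^ 2 := by
  unfold Dv
  rw [show (fun q => (g q)⁻¹) = (fun y => y⁻¹) ∘ g from rfl,
    ((hasDerivAt_inv hg0).comp_hasFDerivAt p hg.hasFDerivAt).fderiv]
  simp; ring

lemma Dv_div (hf : DifferentiableAt ℝ f p) (hg : DifferentiableAt ℝ g p) (hg0 : g p ≠ 0) :
    Dv v (fun q => f q / g q) p = (Dv v f p * g p - f p * Dv v g p) / g p ^ 2 := by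
  have h : Dv v (fun q => f q * (g q)⁻¹) p = _ := Dv_mul (v := v) hf (hg.inv hg0)
  simp only [div_eq_mul_inv]
  rw [h, Dv_inv hg hg0]
  field_simp; ring

lemma Dv_log (hu : DifferentiableAt ℝ u p) (hu0 : u p ≠ 0) :
    Dv v (fun q => Real.log (u q)) p = Dv v u p / u p := by
  unfold Dv
  rw [show (fun q => Real.log (u q)) = Real.log ∘ u from rfl,
    ((Real.hasDerivAt_log hu0).comp_hasFDerivAt p hu.hasFDerivAt).fderiv]
  simp; ring

lemma Dv_fst (v p : ℝ × EuclideanSpace ℝ (Fin n)) :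
    Dv v (fun q => q.1) p = v.1 := by
  unfold Dv
  rw [show (fun q : ℝ × EuclideanSpace ℝ (Fin n) => q.1) = Prod.fst from rfl, fderiv_fst]
  rfl

lemma inner_eq_sum (v w : EuclideanSpace ℝ (Fin n)) :
    (inner ℝ v w : ℝ) = ∑ i, v i * w i := by
  rw [PiLp.inner_apply]; simp [mul_comm]

lemma egrad_apply (f : EuclideanSpace ℝ (Fin n) → ℝ) (x : EuclideanSpace ℝ (Fin n)) (i : Fin n) :
    egrad f x i = epd i f x := by
  unfold egrad epd gradient
  have h1 : ((InnerProductSpace.toDual ℝ (EuclideanSpace ℝ (Fin n))).symm (fderiv ℝ f x)) i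
      = @inner ℝ _ _ (EuclideanSpace.single i (1:ℝ))
        ((InnerProductSpace.toDual ℝ (EuclideanSpace ℝ (Fin n))).symm (fderiv ℝ f x)) := by
    rw [EuclideanSpace.inner_single_left]; simp
  rw [h1, real_inner_comm, InnerProductSpace.toDual_symm_apply]

lemma pdt_eq (hg : DifferentiableAt ℝ g (t, x)) :
    pdt g t x = Dv e0 g (t, x) := by
  unfold pdt Dv e0
  exact (hg.hasFDerivAt.comp_hasDerivAt t
    ((hasDerivAt_id t).prodMk (hasDerivAt_const t x))).deriv

lemma hasFDerivAt_slice (t : ℝ) (x : EuclideanSpace ℝ (Fin n)) (hg : DifferentiableAt ℝ g (t, x)) :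
    HasFDerivAt (fun y => g (t, y))
      ((fderiv ℝ g (t, x)).comp (ContinuousLinearMap.inr ℝ ℝ (EuclideanSpace ℝ (Fin n)))) x :=
  hg.hasFDerivAt.comp x ((hasFDerivAt_const t x).prodMk (hasFDerivAt_id x))

lemma epd_slice_eq (t : ℝ) (x : EuclideanSpace ℝ (Fin n)) (i : Fin n)
    (hg : DifferentiableAt ℝ g (t, x)) :
    epd i (fun y => g (t, y)) x = Dv (eI i) g (t, x) := by
  unfold epd Dv eI
  rw [(hasFDerivAt_slice t x hg).fderiv]
  rfl

lemma sgrad_apply (hg : ContDiff ℝ (⊤ : ℕ∞) g) (i : Fin n) :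
    sgrad g t x i = Dv (eI i) g (t, x) := by
  unfold sgrad
  rw [egrad_apply, epd_slice_eq t x i (sd hg _)]

lemma epd_slice_fun (hg : ContDiff ℝ (⊤ : ℕ∞) g) (i : Fin n) (t : ℝ) :
    epd i (fun y => g (t, y)) = fun y => Dv (eI i) g (t, y) :=
  funext fun y => epd_slice_eq t y i (sd hg _)

lemma slap_eq (hg : ContDiff ℝ (⊤ : ℕ∞) g) :
    slap g t x = ∑ i, Dv (eI i) (Dv (eI i) g) (t, x) := by
  unfold slap elap
  refine Finset.sum_congr rfl fun i _ => ?_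
  rw [epd_slice_fun hg i t, epd_slice_eq t x i (sd (smooth_Dv hg (eI i)) _)]

lemma shess2_eq (hg : ContDiff ℝ (⊤ : ℕ∞) g) :
    shess2 g t x = ∑ i, ∑ j, (Dv (eI i) (Dv (eI j) g) (t, x)) ^ 2 := by
  unfold shess2 ehess2
  refine Finset.sum_congr rfl fun i _ => Finset.sum_congr rfl fun j _ => ?_
  rw [epd_slice_fun hg j t, epd_slice_eq t x i (sd (smooth_Dv hg (eI j)) _)]

lemma norm_sgrad_sq (hg : ContDiff ℝ (⊤ : ℕ∞) g) :
    ‖sgrad g t x‖ ^ 2 = ∑ i, (Dv (eI i) g (t, x)) ^ 2 := by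
  rw [← real_inner_self_eq_norm_sq, PiLp.inner_apply]
  refine Finset.sum_congr rfl fun i _ => ?_
  rw [sgrad_apply hg]
  simp [sq]

/-- Pure algebra: the final combination of the maximum-point information. -/
lemma final_algebra {n : ℕ} {a s g0 : ℝ} (ha : 1 < a) (hs : 0 < s)
    (W Fd Fdd : Fin n → ℝ) (M D4 : Fin n → Fin n → ℝ) (C : Fin n → Fin n → Fin n → ℝ)
    (hsym : ∀ i j, C i i j = C j i i)
    (hA0 : ∀ i, (1-a) * (∑ j, 2*(W j * M i j)) - a * (∑ j, C i j j) = 0)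
    (hB : ∑ i, ((1-a) * (∑ j, (2*(M i j * M i j) + 2*(W j * C i i j)))
        - a * (∑ j, D4 i j)) ≤ 0)
    (hC : 0 ≤ g0 + s * ((1-a) * (∑ j, 2*(W j * ((∑ k, C j k k)
          + ((∑ k, 2*(W k * M j k)) + Fd j))))
        - a * (∑ j, ((∑ k, D4 j k) + ((∑ k, (2*(M j k * M j k)
          + 2*(W k * C j j k))) + Fdd j)))) ) :
    s * g0 - a * s^2 * (∑ j, Fdd j)
      ≥ 2*(a-1)*s^2*(∑ j, W j * Fd j) + 2*s^2*(∑ i, ∑ j, (M i j)^2) := by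
  have idB : ∑ i, ((1-a) * (∑ j, (2*(M i j * M i j) + 2*(W j * C i i j)))
        - a * (∑ j, D4 i j))
      = (2-2*a) * (∑ i, ∑ j, M i j * M i j) + ((2-2*a) * (∑ i, ∑ j, W j * C i i j)
        - a * (∑ i, ∑ j, D4 i j)) := by
    have e1 : ∀ i : Fin n, (1-a) * (∑ j, (2*(M i j * M i j) + 2*(W j * C i i j)))
        - a * (∑ j, D4 i j)
        = (2-2*a) * (∑ j, M i j * M i j) + ((2-2*a) * (∑ j, W j * C i i j)
          - a * (∑ j, D4 i j)) := by
      intro i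
      rw [Finset.sum_add_distrib, ← Finset.mul_sum, ← Finset.mul_sum]
      ring
    rw [Finset.sum_congr rfl fun i _ => e1 i]
    simp only [Finset.sum_add_distrib, Finset.sum_sub_distrib, ← Finset.mul_sum]
  have idC : (1-a) * (∑ j, 2*(W j * ((∑ k, C j k k)
          + ((∑ k, 2*(W k * M j k)) + Fd j))))
        - a * (∑ j, ((∑ k, D4 j k) + ((∑ k, (2*(M j k * M j k)
          + 2*(W k * C j j k))) + Fdd j)))
      = ((2-2*a) * (∑ j, W j * (∑ k, C j k k))
          + ((4-4*a) * (∑ j, W j * (∑ k, W k * M j k))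
            + (2-2*a) * (∑ j, W j * Fd j)))
        - a * ((∑ i, ∑ j, D4 i j) + ((2*(∑ i, ∑ j, M i j * M i j)
            + 2*(∑ i, ∑ j, W j * C i i j)) + (∑ j, Fdd j))) := by
    have e1 : ∀ j : Fin n, 2*(W j * ((∑ k, C j k k) + ((∑ k, 2*(W k * M j k)) + Fd j)))
        = 2*(W j * (∑ k, C j k k)) + (4*(W j * (∑ k, W k * M j k)) + 2*(W j * Fd j)) := by
      intro j
      rw [← Finset.mul_sum]
      ring
    have e2 : ∀ j : Fin n, ((∑ k, D4 j k) + ((∑ k, (2*(M j k * M j k)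
          + 2*(W k * C j j k))) + Fdd j))
        = (∑ k, D4 j k) + ((2*(∑ k, M j k * M j k) + 2*(∑ k, W k * C j j k)) + Fdd j) := by
      intro j
      rw [Finset.sum_add_distrib, ← Finset.mul_sum, ← Finset.mul_sum]
    rw [Finset.sum_congr rfl fun j _ => e1 j, Finset.sum_congr rfl fun j _ => e2 j]
    simp only [Finset.sum_add_distrib, Finset.sum_sub_distrib, ← Finset.mul_sum]
    ring
  have hYT : (∑ i, ∑ j, W j * C i i j) = ∑ j, W j * (∑ k, C j k k) := by
    calc (∑ i, ∑ j, W j * C i i j) = ∑ i, ∑ j, W j * C j i i :=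
          Finset.sum_congr rfl fun i _ => Finset.sum_congr rfl fun j _ => by rw [hsym]
      _ = ∑ j, ∑ i, W j * C j i i := Finset.sum_comm
      _ = ∑ j, W j * (∑ k, C j k k) :=
          Finset.sum_congr rfl fun j _ => (Finset.mul_sum _ _ _).symm
  have haT : a * (∑ j, W j * (∑ k, C j k k))
      = (1-a) * (2 * (∑ j, W j * (∑ k, W k * M j k))) := by
    have e3 : ∀ j : Fin n, a * (W j * (∑ k, C j k k))
        = (1-a) * (2 * (W j * (∑ k, W k * M j k))) := by
      intro j
      have h := hA0 j
      rw [← Finset.mul_sum] at h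
      linear_combination (-(W j)) * h
    calc a * (∑ j, W j * (∑ k, C j k k)) = ∑ j, a * (W j * (∑ k, C j k k)) :=
          Finset.mul_sum _ _ _
      _ = ∑ j, (1-a) * (2 * (W j * (∑ k, W k * M j k))) :=
          Finset.sum_congr rfl fun j _ => e3 j
      _ = (1-a) * (2 * (∑ j, W j * (∑ k, W k * M j k))) := by
          simp only [← Finset.mul_sum]
  rw [idB] at hB
  rw [idC] at hC
  rw [hYT] at hB hC
  set X : ℝ := ∑ i, ∑ j, M i j * M i j with hX
  set T : ℝ := ∑ j, W j * (∑ k, C j k k) with hT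
  set S : ℝ := ∑ j, W j * (∑ k, W k * M j k) with hS
  set P : ℝ := ∑ j, W j * Fd j with hP
  set Q : ℝ := ∑ i, ∑ j, D4 i j with hQ
  set Df : ℝ := ∑ j, Fdd j with hDf
  have hX2 : (∑ i, ∑ j, (M i j)^2) = X := by
    rw [hX]
    exact Finset.sum_congr rfl fun i _ => Finset.sum_congr rfl fun j _ => sq (M i j) ▸ rfl
  rw [hX2]
  have h8 := mul_nonneg hs.le hC
  have h9 : s * (s * ((2-2*a) * X + ((2-2*a) * T - a * Q))) ≤ 0 :=
    mul_nonpos_iff.mpr (Or.inl ⟨hs.le, mul_nonpos_iff.mpr (Or.inl ⟨hs.le, hB⟩)⟩)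
  have h7 : s * (s * (a * T)) = s * (s * ((1-a) * (2*S))) := by rw [haT]
  nlinarith [h8, h9, h7]

end HarnackAux

open HarnackAux

/-- Maximum-point inequality for the Li–Yau-type Harnack
quantity `F = t(‖∇w‖² + aA/u − a∂ₜw)`, `a > 1`, where `u > 0` solves
`∂ₜu = Δu + A` and `w = log u`: if at `(s, z)`, `s > 0`, one has `∇F = 0`,
`ΔF ≤ 0` and `∂ₜF ≥ 0`, then at `(s, z)`:
`F − as²Δ(A·u⁻¹) ≥ 2(a−1)s²⟨∇w, ∇(A·u⁻¹)⟩ + 2s²‖D²w‖²`. -/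
theorem harnack_F_max_point (n : ℕ) (hn : 1 ≤ n) (a : ℝ) (ha : 1 < a)
    (u A : ℝ × EuclideanSpace ℝ (Fin n) → ℝ)
    (hu : ContDiff ℝ (⊤ : ℕ∞) u) (hA : ContDiff ℝ (⊤ : ℕ∞) A)
    (hpos : ∀ p, 0 < u p)
    (hheat : ∀ t x, pdt u t x = slap u t x + A (t, x))
    (w : ℝ × EuclideanSpace ℝ (Fin n) → ℝ) (hw : w = Real.log ∘ u)
    (F : ℝ × EuclideanSpace ℝ (Fin n) → ℝ)
    (hF : F = fun p => p.1 * (‖sgrad w p.1 p.2‖ ^ 2 + a * A p / u p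
      - a * pdt w p.1 p.2))
    (s : ℝ) (hs : 0 < s) (z : EuclideanSpace ℝ (Fin n))
    (hgrad : sgrad F s z = 0) (hlap : slap F s z ≤ 0) (hdt : 0 ≤ pdt F s z) :
    F (s, z) - a * s ^ 2 * slap (fun p => A p / u p) s z
      ≥ 2 * (a - 1) * s ^ 2 * (inner ℝ (sgrad w s z)
          (sgrad (fun p => A p / u p) s z) : ℝ)
        + 2 * s ^ 2 * shess2 w s z := by
  have hune : ∀ p, u p ≠ 0 := fun p => (hpos p).ne'
  have hwS : ContDiff ℝ (⊤ : ℕ∞) w := by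
    rw [hw]; exact hu.log hune
  set f : ℝ × EuclideanSpace ℝ (Fin n) → ℝ := fun p => A p / u p with hfdef
  have hfS : ContDiff ℝ (⊤ : ℕ∞) f := hA.div hu hune
  have hW : ∀ j, ContDiff ℝ (⊤ : ℕ∞) (Dv (eI j) w) := fun j => smooth_Dv hwS _
  have hWW : ∀ i j, ContDiff ℝ (⊤ : ℕ∞) (Dv (eI i) (Dv (eI j) w)) :=
    fun i j => smooth_Dv (hW j) _
  have dS1 : ContDiff ℝ (⊤ : ℕ∞) (fun p => ∑ j, (Dv (eI j) w p)^2) :=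
    ContDiff.sum fun j _ => (hW j).pow 2
  have dS2 : ContDiff ℝ (⊤ : ℕ∞) (fun p => ∑ j, Dv (eI j) (Dv (eI j) w) p) :=
    ContDiff.sum fun j _ => hWW j j
  -- the function w satisfies ∂ₜw = Δw + |∇w|² + f
  have hDvw : ∀ (v p' : ℝ × EuclideanSpace ℝ (Fin n)), Dv v w p' = Dv v u p' / u p' := by
    intro v p'
    rw [hw]
    exact Dv_log (sd hu p') (hune p')
  have H1 : ∀ p : ℝ × EuclideanSpace ℝ (Fin n), Dv e0 w p
      = (∑ j, Dv (eI j) (Dv (eI j) w) p) + ((∑ j, (Dv (eI j) w p)^2) + f p) := by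
    rintro ⟨t, x⟩
    have hh := hheat t x
    rw [pdt_eq (sd hu (t, x)), slap_eq hu] at hh
    have key : ∀ j, Dv (eI j) (Dv (eI j) u) (t, x) / u (t, x)
        = Dv (eI j) (Dv (eI j) w) (t, x) + (Dv (eI j) w (t, x))^2 := by
      intro j
      have e3 : Dv (eI j) (Dv (eI j) w) (t, x)
          = (Dv (eI j) (Dv (eI j) u) (t, x) * u (t, x)
            - Dv (eI j) u (t, x) * Dv (eI j) u (t, x)) / u (t, x) ^ 2 := by
        rw [show Dv (eI j) w = fun p' => Dv (eI j) u p' / u p' from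
          funext fun p' => hDvw (eI j) p']
        exact Dv_div (sd (smooth_Dv hu (eI j)) (t, x)) (sd hu (t, x)) (hune (t, x))
      have h0 := hune (t, x)
      rw [e3, hDvw (eI j) (t, x)]
      field_simp
      ring
    rw [hDvw e0 (t, x), hh, add_div, Finset.sum_div,
      Finset.sum_congr rfl fun j _ => key j, Finset.sum_add_distrib]
    simp only [hfdef]
    ring
  -- F = t * G
  set G : ℝ × EuclideanSpace ℝ (Fin n) → ℝ :=
    fun p => (1-a) * (∑ j, (Dv (eI j) w p)^2) - a * (∑ j, Dv (eI j) (Dv (eI j) w) p)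
    with hGdef
  have hGS : ContDiff ℝ (⊤ : ℕ∞) G := (contDiff_const.mul dS1).sub (contDiff_const.mul dS2)
  have H2 : F = fun p => p.1 * G p := by
    funext p
    obtain ⟨t, x⟩ := p
    rw [hF]
    simp only
    rw [norm_sgrad_sq hwS, pdt_eq (sd hwS (t, x)), H1 (t, x), hGdef]
    simp only [hfdef]
    ring
  have FS : ContDiff ℝ (⊤ : ℕ∞) F := by rw [H2]; exact contDiff_fst.mul hGS
  have DvF : ∀ (v p' : ℝ × EuclideanSpace ℝ (Fin n)),
      Dv v F p' = v.1 * G p' + p'.1 * Dv v G p' := by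
    intro v p'
    rw [H2, Dv_mul differentiableAt_fst (sd hGS p'), Dv_fst]
  -- the three max-point facts in terms of G
  have hGrad0 : ∀ i, Dv (eI i) G (s, z) = 0 := by
    intro i
    have h0 : sgrad F s z i = 0 := by rw [hgrad]; rfl
    rw [sgrad_apply FS i, DvF (eI i) (s, z)] at h0
    have h1 : s * Dv (eI i) G (s, z) = 0 := by
      have : (eI (n := n) i).1 = 0 := rfl
      rw [this] at h0
      simpa using h0
    rcases mul_eq_zero.mp h1 with h | h
    · exact absurd h (ne_of_gt hs)
    · exact h
  have hLap0 : ∑ i, Dv (eI i) (Dv (eI i) G) (s, z) ≤ 0 := by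
    have h1 : slap F s z = ∑ i, Dv (eI i) (Dv (eI i) F) (s, z) := slap_eq FS
    have h2 : ∀ (i : Fin n) (p' : ℝ × EuclideanSpace ℝ (Fin n)),
        Dv (eI i) F p' = p'.1 * Dv (eI i) G p' := by
      intro i p'
      rw [DvF]
      have : (eI (n := n) i).1 = 0 := rfl
      rw [this]
      ring
    have h3 : ∀ i : Fin n, Dv (eI i) (Dv (eI i) F) (s, z)
        = s * Dv (eI i) (Dv (eI i) G) (s, z) := by
      intro i
      rw [show Dv (eI i) F = fun p' => p'.1 * Dv (eI i) G p' from funext (h2 i),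
        Dv_mul differentiableAt_fst (sd (smooth_Dv hGS (eI i)) (s, z)), Dv_fst]
      have : (eI (n := n) i).1 = 0 := rfl
      rw [this]
      ring
    rw [h1, Finset.sum_congr rfl fun i _ => h3 i, ← Finset.mul_sum] at hlap
    by_contra hcon
    push_neg at hcon
    nlinarith
  have hDt0 : 0 ≤ G (s, z) + s * Dv e0 G (s, z) := by
    rw [pdt_eq (sd FS (s, z)), DvF e0 (s, z)] at hdt
    have : (e0 (n := n)).1 = 1 := rfl
    rw [this] at hdt
    simpa using hdt
  -- generic first-derivative expansion of G
  have ExpA : ∀ (v p' : ℝ × EuclideanSpace ℝ (Fin n)), Dv v G p'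
      = (1-a) * (∑ j, 2*(Dv (eI j) w p' * Dv v (Dv (eI j) w) p'))
        - a * (∑ j, Dv v (Dv (eI j) (Dv (eI j) w)) p') := by
    intro v p'
    rw [hGdef]
    rw [Dv_sub (sd (contDiff_const.mul dS1) p') (sd (contDiff_const.mul dS2) p'),
      Dv_const_mul (sd dS1 p'), Dv_const_mul (sd dS2 p'),
      Dv_sum (fun j q => (Dv (eI j) w q)^2) (fun j => (sd (hW j) p').pow 2),
      Dv_sum _ (fun j => sd (hWW j j) p')]
    congr 1
    congr 1
    refine Finset.sum_congr rfl fun j _ => ?_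
    rw [Dv_sq (sd (hW j) p')]
    ring
  have ExpB : ∀ i : Fin n, Dv (eI i) (Dv (eI i) G) (s, z)
      = (1-a) * (∑ j, (2*(Dv (eI i) (Dv (eI j) w) (s, z) * Dv (eI i) (Dv (eI j) w) (s, z))
          + 2*(Dv (eI j) w (s, z) * Dv (eI i) (Dv (eI i) (Dv (eI j) w)) (s, z))))
        - a * (∑ j, Dv (eI i) (Dv (eI i) (Dv (eI j) (Dv (eI j) w))) (s, z)) := by
    intro i
    rw [show Dv (eI i) G = fun p' => (1-a) * (∑ j, 2*(Dv (eI j) w p' * Dv (eI i) (Dv (eI j) w) p'))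
        - a * (∑ j, Dv (eI i) (Dv (eI j) (Dv (eI j) w)) p') from funext fun p' => ExpA (eI i) p']
    have d1 : ContDiff ℝ (⊤ : ℕ∞) (fun p' => ∑ j, 2*(Dv (eI j) w p' * Dv (eI i) (Dv (eI j) w) p')) :=
      ContDiff.sum fun j _ => contDiff_const.mul ((hW j).mul (hWW i j))
    have d2 : ContDiff ℝ (⊤ : ℕ∞) (fun p' => ∑ j, Dv (eI i) (Dv (eI j) (Dv (eI j) w)) p') :=
      ContDiff.sum fun j _ => smooth_Dv (hWW j j) (eI i)
    rw [Dv_sub (sd (contDiff_const.mul d1) (s, z)) (sd (contDiff_const.mul d2) (s, z)),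
      Dv_const_mul (sd d1 (s, z)), Dv_const_mul (sd d2 (s, z)),
      Dv_sum _ (fun j => sd (contDiff_const.mul ((hW j).mul (hWW i j))) (s, z)),
      Dv_sum _ (fun j => sd (smooth_Dv (hWW j j) (eI i)) (s, z))]
    congr 1
    congr 1
    refine Finset.sum_congr rfl fun j _ => ?_
    rw [Dv_const_mul (f := fun q => Dv (eI j) w q * Dv (eI i) (Dv (eI j) w) q) ((sd (hW j) (s, z)).mul (sd (hWW i j) (s, z))),
      Dv_mul (sd (hW j) (s, z)) (sd (hWW i j) (s, z))]
    ring
  -- mixed time-space derivative of w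
  have c2 : ∀ (j : Fin n) (p' : ℝ × EuclideanSpace ℝ (Fin n)),
      Dv (eI j) (Dv e0 w) p'
      = (∑ k, Dv (eI j) (Dv (eI k) (Dv (eI k) w)) p')
        + ((∑ k, 2*(Dv (eI k) w p' * Dv (eI j) (Dv (eI k) w) p')) + Dv (eI j) f p') := by
    intro j p'
    rw [show Dv e0 w = fun p'' => (∑ k, Dv (eI k) (Dv (eI k) w) p'')
      + ((∑ k, (Dv (eI k) w p'')^2) + f p'') from funext H1]
    rw [Dv_add (sd dS2 p') (sd (dS1.add hfS) p'), Dv_add (sd dS1 p') (sd hfS p'),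
      Dv_sum _ (fun k => sd (hWW k k) p'), Dv_sum (fun k q => (Dv (eI k) w q)^2) (fun k => (sd (hW k) p').pow 2)]
    congr 1
    congr 1
    refine Finset.sum_congr rfl fun k _ => ?_
    rw [Dv_sq (sd (hW k) p')]
    ring
  have c4 : ∀ j : Fin n, Dv e0 (Dv (eI j) (Dv (eI j) w)) (s, z)
      = (∑ k, Dv (eI j) (Dv (eI j) (Dv (eI k) (Dv (eI k) w))) (s, z))
        + ((∑ k, (2*(Dv (eI j) (Dv (eI k) w) (s, z) * Dv (eI j) (Dv (eI k) w) (s, z))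
          + 2*(Dv (eI k) w (s, z) * Dv (eI j) (Dv (eI j) (Dv (eI k) w)) (s, z))))
          + Dv (eI j) (Dv (eI j) f) (s, z)) := by
    intro j
    rw [Dv_comm (hW j) e0 (eI j) (s, z)]
    rw [show Dv e0 (Dv (eI j) w) = Dv (eI j) (Dv e0 w) from
      funext fun p' => Dv_comm hwS e0 (eI j) p']
    rw [show Dv (eI j) (Dv e0 w) = fun p' => (∑ k, Dv (eI j) (Dv (eI k) (Dv (eI k) w)) p')
      + ((∑ k, 2*(Dv (eI k) w p' * Dv (eI j) (Dv (eI k) w) p')) + Dv (eI j) f p') from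
      funext fun p' => c2 j p']
    have d1 : ContDiff ℝ (⊤ : ℕ∞) (fun p' => ∑ k, Dv (eI j) (Dv (eI k) (Dv (eI k) w)) p') :=
      ContDiff.sum fun k _ => smooth_Dv (hWW k k) (eI j)
    have d2 : ContDiff ℝ (⊤ : ℕ∞) (fun p' => ∑ k, 2*(Dv (eI k) w p' * Dv (eI j) (Dv (eI k) w) p')) :=
      ContDiff.sum fun k _ => contDiff_const.mul ((hW k).mul (hWW j k))
    have d3 : ContDiff ℝ (⊤ : ℕ∞) (Dv (eI j) f) := smooth_Dv hfS (eI j)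
    rw [Dv_add (sd d1 (s, z)) (sd (d2.add d3) (s, z)),
      Dv_add (sd d2 (s, z)) (sd d3 (s, z)),
      Dv_sum _ (fun k => sd (smooth_Dv (hWW k k) (eI j)) (s, z)),
      Dv_sum _ (fun k => sd (contDiff_const.mul ((hW k).mul (hWW j k))) (s, z))]
    congr 1
    congr 1
    refine Finset.sum_congr rfl fun k _ => ?_
    rw [Dv_const_mul (f := fun q => Dv (eI k) w q * Dv (eI j) (Dv (eI k) w) q) ((sd (hW k) (s, z)).mul (sd (hWW j k) (s, z))),
      Dv_mul (sd (hW k) (s, z)) (sd (hWW j k) (s, z))]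
    ring
  have ExpC : Dv e0 G (s, z)
      = (1-a) * (∑ j, 2*(Dv (eI j) w (s, z) * ((∑ k, Dv (eI j) (Dv (eI k) (Dv (eI k) w)) (s, z))
          + ((∑ k, 2*(Dv (eI k) w (s, z) * Dv (eI j) (Dv (eI k) w) (s, z)))
            + Dv (eI j) f (s, z)))))
        - a * (∑ j, ((∑ k, Dv (eI j) (Dv (eI j) (Dv (eI k) (Dv (eI k) w))) (s, z))
          + ((∑ k, (2*(Dv (eI j) (Dv (eI k) w) (s, z) * Dv (eI j) (Dv (eI k) w) (s, z))
            + 2*(Dv (eI k) w (s, z) * Dv (eI j) (Dv (eI j) (Dv (eI k) w)) (s, z))))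
            + Dv (eI j) (Dv (eI j) f) (s, z)))) := by
    rw [ExpA e0 (s, z)]
    congr 1
    · congr 1
      refine Finset.sum_congr rfl fun j _ => ?_
      rw [Dv_comm hwS e0 (eI j) (s, z), c2 j (s, z)]
    · congr 1
      exact Finset.sum_congr rfl fun j _ => c4 j
  -- symmetry of third derivatives
  have hsym : ∀ i j : Fin n, Dv (eI i) (Dv (eI i) (Dv (eI j) w)) (s, z)
      = Dv (eI j) (Dv (eI i) (Dv (eI i) w)) (s, z) := by
    intro i j
    rw [show Dv (eI i) (Dv (eI j) w) = Dv (eI j) (Dv (eI i) w) from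
      funext fun p' => Dv_comm hwS (eI i) (eI j) p']
    exact Dv_comm (hW i) (eI i) (eI j) (s, z)
  -- package the three facts
  have hA0 : ∀ i : Fin n, (1-a) * (∑ j, 2*(Dv (eI j) w (s, z) * Dv (eI i) (Dv (eI j) w) (s, z)))
      - a * (∑ j, Dv (eI i) (Dv (eI j) (Dv (eI j) w)) (s, z)) = 0 := by
    intro i
    rw [← ExpA (eI i) (s, z)]
    exact hGrad0 i
  have hB : ∑ i, ((1-a) * (∑ j, (2*(Dv (eI i) (Dv (eI j) w) (s, z) * Dv (eI i) (Dv (eI j) w) (s, z))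
        + 2*(Dv (eI j) w (s, z) * Dv (eI i) (Dv (eI i) (Dv (eI j) w)) (s, z))))
      - a * (∑ j, Dv (eI i) (Dv (eI i) (Dv (eI j) (Dv (eI j) w))) (s, z))) ≤ 0 := by
    rw [← Finset.sum_congr rfl fun i _ => ExpB i]
    exact hLap0
  have hC := hDt0
  rw [ExpC] at hC
  -- rewrite the goal
  rw [H2]
  have hg1 : (inner ℝ (sgrad w s z) (sgrad f s z) : ℝ)
      = ∑ j, Dv (eI j) w (s, z) * Dv (eI j) f (s, z) := by
    rw [inner_eq_sum]
    exact Finset.sum_congr rfl fun j _ => by rw [sgrad_apply hwS, sgrad_apply hfS]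
  rw [hg1, slap_eq hfS, shess2_eq hwS]
  exact final_algebra ha hs
    (fun j => Dv (eI j) w (s, z))
    (fun j => Dv (eI j) f (s, z))
    (fun j => Dv (eI j) (Dv (eI j) f) (s, z))
    (fun i j => Dv (eI i) (Dv (eI j) w) (s, z))
    (fun i j => Dv (eI i) (Dv (eI i) (Dv (eI j) (Dv (eI j) w))) (s, z))
    (fun i j k => Dv (eI i) (Dv (eI j) (Dv (eI k) w)) (s, z))
    hsym hA0 hB hC
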